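/- Let h : ℕ → ℕ be strictly increasing with h(i) ≥ 1, let b ≥ 2 with P_j > b, and let α_j = Σ_{i=0}^j P_i^(-h(i)) have eventually periodic base-b expansion with pre-period s and period ending at position t. Then t − s ≤ t < Π_{i=0}^j P_i^(h(i)) ≤ P_j^((j+1)·h(j)); consequently, among any M(j) = P_j^((j+1)h(j)) consecutive digits of the base-b expansion of α_j (past position 1), at least one digit is nonzero. -/

import Mathlib

/-!
Write `α = N / Q` with `Q = ∏ P i ^ h i`. The digits are produced by long division: with
`r n = b ^ n * N % Q` (that is, `Q` times the fractional part of `b ^ n * α`) one has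
`b * r m = Q * D (m + 1) + r (m + 1)`. Since `P j` divides `Q` but neither `b` nor `N`, no `r n`
vanishes. Pigeonhole on the `Q` remainders `r 0, …, r (Q - 1)`, which take at most `Q - 1`
values, gives a period ending before `Q`; and a run of `L` zero digits multiplies a remainder
by `b ^ L`, which stays below `Q` only if `b ^ L < Q`.
-/

/-- `P i` is the `i`-th prime number (`P 0 = 2`). -/
noncomputable def P (i : ℕ) : ℕ := Nat.nth Nat.Prime i

open Finset

def digitSum (b : ℕ) (D : ℕ → ℕ) (n : ℕ) : ℚ :=
  ∑ i ∈ Icc 1 n, (D i : ℚ) * (b : ℚ) ^ (-(i : ℤ))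

def digitValue (b : ℕ) (D : ℕ → ℕ) : ℕ → ℕ
  | 0 => 0
  | n + 1 => b * digitValue b D n + D (n + 1)

def IsBaseExpansion (b : ℕ) (D : ℕ → ℕ) (x : ℚ) : Prop :=
  ∀ n : ℕ, 1 ≤ n → digitSum b D n ≤ x ∧ x < digitSum b D n + (b : ℚ) ^ (-(n : ℤ))

section BaseExpansion

variable {b N Q : ℕ} {D : ℕ → ℕ}

theorem digitSum_zero : digitSum b D 0 = 0 := by
  simp [digitSum]

theorem digitSum_succ (n : ℕ) :
    digitSum b D (n + 1) = digitSum b D n + D (n + 1) * (b : ℚ) ^ (-(n + 1 : ℕ) : ℤ) :=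
  sum_Icc_succ_top (by omega) _

theorem cast_digitValue (hb : b ≠ 0) (n : ℕ) :
    (digitValue b D n : ℚ) = b ^ n * digitSum b D n := by
  induction n with
  | zero => simp [digitValue, digitSum_zero]
  | succ n ih =>
    have hbn : (b : ℚ) ^ (n + 1) * (b : ℚ) ^ (-(n + 1 : ℕ) : ℤ) = 1 := by
      rw [zpow_neg, zpow_natCast, mul_inv_cancel₀ (by positivity)]
    rw [digitValue, digitSum_succ, mul_add, ← mul_assoc, mul_comm _ (D (n + 1) : ℚ), mul_assoc,
      hbn, pow_succ, mul_comm _ (b : ℚ), mul_assoc, ← ih]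
    push_cast
    ring

theorem IsBaseExpansion.lt_one {x : ℚ} (hD : IsBaseExpansion b D x) (hD1 : D 1 < b) : x < 1 := by
  have hb : (0 : ℚ) < b := by exact_mod_cast Nat.zero_lt_of_lt hD1
  have hD1' : (D 1 : ℚ) + 1 ≤ b := by exact_mod_cast hD1
  have hx := (hD 1 le_rfl).2
  rw [← zero_add 1, digitSum_succ, digitSum_zero, zero_add] at hx
  calc x < (D 1 + 1) * (b : ℚ)⁻¹ := by simpa [add_mul] using hx
    _ ≤ b * (b : ℚ)⁻¹ := by gcongr
    _ = 1 := mul_inv_cancel₀ hb.ne'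

theorem IsBaseExpansion.pow_mul_div_eq_digitValue (hb : 0 < b) (hNQ : N < Q)
    (hD : IsBaseExpansion b D (N / Q)) (n : ℕ) : b ^ n * N / Q = digitValue b D n := by
  rcases Nat.eq_zero_or_pos n with rfl | hn
  · simp [digitValue, Nat.div_eq_of_lt hNQ]
  obtain ⟨hle, hlt⟩ := hD n hn
  have hbn : (0 : ℚ) < b ^ n := by positivity
  rw [← Nat.floor_div_eq_div (K := ℚ), Nat.floor_eq_iff (by positivity), cast_digitValue hb.ne']
  push_cast
  rw [mul_div_assoc]
  constructor
  · exact mul_le_mul_of_nonneg_left hle hbn.le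
  · calc _ < (b : ℚ) ^ n * (digitSum b D n + (b : ℚ) ^ (-(n : ℤ))) :=
          mul_lt_mul_of_pos_left hlt hbn
      _ = _ := by rw [mul_add, zpow_neg, zpow_natCast, mul_inv_cancel₀ hbn.ne']

theorem IsBaseExpansion.digit_mul_add_mod (hb : 0 < b) (hNQ : N < Q)
    (hD : IsBaseExpansion b D (N / Q)) (m : ℕ) :
    b ^ (m + 1) * N % Q + Q * D (m + 1) = b * (b ^ m * N % Q) := by
  have hdiv := hD.pow_mul_div_eq_digitValue hb hNQ
  have h₁ := Nat.div_add_mod (b ^ (m + 1) * N) Q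
  have h₂ := Nat.div_add_mod (b ^ m * N) Q
  rw [hdiv, digitValue, ← hdiv, pow_succ, mul_comm _ b, mul_assoc] at h₁
  rw [pow_succ, mul_comm _ b, mul_assoc]
  linear_combination h₁ - b * h₂

theorem IsBaseExpansion.digit_eq_and_mod_eq (hb : 0 < b) (hNQ : N < Q)
    (hD : IsBaseExpansion b D (N / Q)) (m : ℕ) :
    b * (b ^ m * N % Q) / Q = D (m + 1) ∧
      b * (b ^ m * N % Q) % Q = b ^ (m + 1) * N % Q :=
  (Nat.div_mod_unique (hNQ.trans_le' (Nat.zero_le _))).2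
    ⟨hD.digit_mul_add_mod hb hNQ m, Nat.mod_lt _ (hNQ.trans_le' (Nat.zero_le _))⟩


theorem pow_add_mul_mod (x m : ℕ) : b ^ (x + m) * N % Q = b ^ m * (b ^ x * N % Q) % Q := by
  rw [Nat.mul_mod_mod, pow_add, mul_comm (b ^ x), mul_assoc]

theorem IsBaseExpansion.digit_add_sub_eq (hb : 0 < b) (hNQ : N < Q)
    (hD : IsBaseExpansion b D (N / Q)) {x y : ℕ} (hxy : x ≤ y)
    (hr : b ^ x * N % Q = b ^ y * N % Q) {i : ℕ} (hi : x < i) : D (i + (y - x)) = D i := by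
  obtain ⟨m, rfl⟩ : ∃ m, i = x + m + 1 := ⟨i - x - 1, by omega⟩
  rw [show x + m + 1 + (y - x) = y + m + 1 by omega, ← (hD.digit_eq_and_mod_eq hb hNQ _).1,
    ← (hD.digit_eq_and_mod_eq hb hNQ _).1, pow_add_mul_mod, pow_add_mul_mod, hr]

theorem IsBaseExpansion.pow_add_mul_mod_of_digits_eq_zero (hb : 0 < b) (hNQ : N < Q)
    (hD : IsBaseExpansion b D (N / Q)) {k L : ℕ} (hzero : ∀ i, k < i → i ≤ k + L → D i = 0) :
    b ^ (k + L) * N % Q = b ^ L * (b ^ k * N % Q) := by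
  induction L with
  | zero => simp
  | succ L ih =>
    have hstep := hD.digit_mul_add_mod hb hNQ (k + L)
    rw [hzero (k + L + 1) (by omega) le_rfl, mul_zero, add_zero,
      ih fun i hi hiL => hzero i hi (by omega)] at hstep
    rw [← add_assoc, hstep, pow_succ]
    ring

/-- A zero digit multiplies the remainder by `b`, so a run of `L ≥ Q` zeros would push a
nonzero remainder past `b ^ L > Q`. -/
theorem IsBaseExpansion.exists_digit_ne_zero (hb : 2 ≤ b) (hNQ : N < Q)
    (hD : IsBaseExpansion b D (N / Q)) (hr : ∀ n, b ^ n * N % Q ≠ 0) {L : ℕ} (hL : Q ≤ L)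
    (k : ℕ) : ∃ i, k < i ∧ i ≤ k + L ∧ D i ≠ 0 := by
  by_contra! hzero
  have hrun := hD.pow_add_mul_mod_of_digits_eq_zero (by omega) hNQ hzero
  have hlt : b ^ (k + L) * N % Q < Q := Nat.mod_lt _ (by omega)
  have hpos : 1 ≤ b ^ k * N % Q := Nat.one_le_iff_ne_zero.2 (hr k)
  have hpow : L < b ^ L := Nat.lt_pow_self (by omega)
  nlinarith

theorem exists_lt_lt_pow_mul_mod_eq (hQ : 0 < Q) (hr : ∀ n, b ^ n * N % Q ≠ 0) :
    ∃ x y, x < y ∧ y < Q ∧ b ^ x * N % Q = b ^ y * N % Q := by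
  have hmaps : Set.MapsTo (fun n => b ^ n * N % Q) (range Q) ((range Q).erase 0) :=
    fun n _ => mem_erase.2 ⟨hr n, mem_range.2 (Nat.mod_lt _ hQ)⟩
  have hcard : #((range Q).erase 0) < #(range Q) :=
    card_erase_lt_of_mem (mem_range.2 hQ)
  obtain ⟨x, hx, y, hy, hne, heq⟩ := exists_ne_map_eq_of_card_lt_of_maps_to hcard hmaps
  rcases hne.lt_or_gt with h | h
  · exact ⟨x, y, h, mem_range.1 hy, heq⟩
  · exact ⟨y, x, h, mem_range.1 hx, heq.symm⟩

end BaseExpansion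

theorem sum_inv_eq_sum_prod_erase_div {ι K : Type*} [DecidableEq ι] [Field K] (s : Finset ι)
    (f : ι → K) (hf : ∀ i ∈ s, f i ≠ 0) :
    ∑ i ∈ s, (f i)⁻¹ = (∑ i ∈ s, ∏ k ∈ s.erase i, f k) / ∏ i ∈ s, f i := by
  rw [sum_div]
  refine sum_congr rfl fun i hi => ?_
  have hrest : ∏ k ∈ s.erase i, f k ≠ 0 := prod_ne_zero_iff.2 fun k hk => hf k (mem_of_mem_erase hk)
  rw [← mul_prod_erase s f hi, div_mul_cancel_right₀ hrest]

theorem Nat.Prime.not_dvd_sum_prod_erase {ι : Type*} [DecidableEq ι] {p : ℕ} (hp : p.Prime)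
    {s : Finset ι} {f : ι → ℕ} {j : ι} (hj : j ∈ s) (hpj : p ∣ f j)
    (hpk : ∀ k ∈ s, k ≠ j → ¬ p ∣ f k) : ¬ p ∣ ∑ i ∈ s, ∏ k ∈ s.erase i, f k := by
  have hothers : p ∣ ∑ i ∈ s.erase j, ∏ k ∈ s.erase i, f k :=
    dvd_sum fun i hi => hpj.trans <| dvd_prod_of_mem _ <|
      mem_erase.2 ⟨fun h => (ne_of_mem_erase hi) h.symm, hj⟩
  rw [← add_sum_erase _ _ hj, Nat.dvd_add_left hothers]
  intro hdvd
  obtain ⟨k, hk, hpfk⟩ := hp.prime.exists_mem_finset_dvd hdvd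
  exact hpk k (mem_of_mem_erase hk) (ne_of_mem_erase hk) hpfk

theorem pow_mul_mod_ne_zero {p b N Q : ℕ} (hp : p.Prime) (hpQ : p ∣ Q) (hpb : ¬ p ∣ b)
    (hpN : ¬ p ∣ N) (n : ℕ) : b ^ n * N % Q ≠ 0 := fun h =>
  (hp.dvd_mul.1 (hpQ.trans (Nat.dvd_of_mod_eq_zero h))).elim
    (fun h => hpb (hp.dvd_of_dvd_pow h)) hpN

theorem P_prime (i : ℕ) : (P i).Prime := Nat.prime_nth_prime i

theorem P_strictMono : StrictMono P := Nat.nth_strictMono Nat.infinite_setOfPred_prime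

theorem not_P_dvd_pow_P {i k : ℕ} (hik : k ≠ i) (e : ℕ) : ¬ P i ∣ P k ^ e := fun h =>
  hik <| P_strictMono.injective <|
    ((Nat.prime_dvd_prime_iff_eq (P_prime i) (P_prime k)).1 ((P_prime i).dvd_of_dvd_pow h)).symm

theorem prod_P_pow_le {h : ℕ → ℕ} (hmono : Monotone h) (j : ℕ) :
    ∏ i ∈ range (j + 1), P i ^ h i ≤ P j ^ ((j + 1) * h j) := by
  have hle : ∀ i ∈ range (j + 1), P i ^ h i ≤ P j ^ h j := fun i hi => by
    have hij : i ≤ j := Nat.lt_succ_iff.1 (mem_range.1 hi)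
    calc P i ^ h i ≤ P j ^ h i := Nat.pow_le_pow_left (P_strictMono.monotone hij) _
      _ ≤ P j ^ h j := Nat.pow_le_pow_right (P_prime j).pos (hmono hij)
  calc ∏ i ∈ range (j + 1), P i ^ h i ≤ (P j ^ h j) ^ #(range (j + 1)) := prod_le_pow_card _ _ _ hle
    _ = P j ^ ((j + 1) * h j) := by rw [card_range, ← pow_mul, mul_comm]

theorem no_long_zero_runs_general
    (h : ℕ → ℕ) (hmono : StrictMono h) (hpos : ∀ i, 1 ≤ h i)
    (j b : ℕ) (hb : 2 ≤ b) (hbj : b < P j)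
    (D : ℕ → ℕ) (hDdigit : ∀ i, D i < b)
    (hD : ∀ n : ℕ, 1 ≤ n →
      (∑ i ∈ Finset.Icc 1 n, (D i : ℚ) * (b : ℚ) ^ (-(i : ℤ))) ≤
          (∑ i ∈ Finset.range (j + 1), (P i : ℚ) ^ (-(h i : ℤ))) ∧
        (∑ i ∈ Finset.range (j + 1), (P i : ℚ) ^ (-(h i : ℤ))) <
          (∑ i ∈ Finset.Icc 1 n, (D i : ℚ) * (b : ℚ) ^ (-(i : ℤ))) + (b : ℚ) ^ (-(n : ℤ)))
    (s t : ℕ)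
    (hleast : ∀ s' t', s' < t' → (∀ i, s' < i → D (i + (t' - s')) = D i) → t ≤ t') :
    t - s ≤ t ∧
      t < ∏ i ∈ Finset.range (j + 1), P i ^ h i ∧
      (∏ i ∈ Finset.range (j + 1), P i ^ h i) ≤ P j ^ ((j + 1) * h j) ∧
      ∀ k : ℕ, 1 ≤ k → ∃ i, k ≤ i ∧ i < k + P j ^ ((j + 1) * h j) ∧ D i ≠ 0 := by
  set Q := ∏ i ∈ range (j + 1), P i ^ h i
  set N := ∑ i ∈ range (j + 1), ∏ k ∈ (range (j + 1)).erase i, P k ^ h k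
  have hQ : 0 < Q := prod_pos fun i _ => pow_pos (P_prime i).pos _
  have hα : ∑ i ∈ range (j + 1), (P i : ℚ) ^ (-(h i : ℤ)) = N / Q := by
    simp only [zpow_neg, zpow_natCast, N, Q]
    rw [sum_inv_eq_sum_prod_erase_div _ _ fun i _ => pow_ne_zero _ (Nat.cast_ne_zero.2 (P_prime i).ne_zero)]
    push_cast
    rfl
  have hexp : IsBaseExpansion b D (N / Q) := hα ▸ hD
  have hNQ : N < Q := by
    have := hexp.lt_one (hDdigit 1)
    rwa [div_lt_one (by exact_mod_cast hQ), Nat.cast_lt] at this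
  have hjmem : j ∈ range (j + 1) := self_mem_range_succ j
  have hPjQ : P j ∣ Q := (dvd_pow_self _ (by have := hpos j; omega)).trans (dvd_prod_of_mem _ hjmem)
  have hr : ∀ n, b ^ n * N % Q ≠ 0 := pow_mul_mod_ne_zero (P_prime j) hPjQ
    (Nat.not_dvd_of_pos_of_lt (by omega) hbj)
    ((P_prime j).not_dvd_sum_prod_erase hjmem (dvd_pow_self _ (by have := hpos j; omega))
      fun k _ hk => not_P_dvd_pow_P hk _)
  have hQM : Q ≤ P j ^ ((j + 1) * h j) := prod_P_pow_le hmono.monotone j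
  obtain ⟨x, y, hxy, hyQ, hrxy⟩ := exists_lt_lt_pow_mul_mod_eq hQ hr
  refine ⟨t.sub_le s,
    (hleast x y hxy fun i hi => hexp.digit_add_sub_eq (by omega) hNQ hxy.le hrxy hi).trans_lt hyQ,
    hQM, fun k hk => ?_⟩
  obtain ⟨i, hki, hik, hi⟩ := hexp.exists_digit_ne_zero hb hNQ hr hQM (k - 1)
  exact ⟨i, by omega, by omega, hi⟩

/-- Let `D` be the base-`b` expansion of `α_j = Σ_{i=0}^j P_i^(-h(i))`, where `b < P j`,
and let `(s, t)` describe its eventually periodic structure (pre-period `s`, period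
ending at position `t`), with `t` least possible. Then
`t - s ≤ t < Π_{i=0}^j P_i^(h i) ≤ P j ^ ((j+1)·h j) = M j`; consequently any `M j`
consecutive digits (from position `1` on) contain a nonzero digit. -/
theorem no_long_zero_runs
    (h : ℕ → ℕ) (hmono : StrictMono h) (hpos : ∀ i, 1 ≤ h i)
    (j b : ℕ) (hb : 2 ≤ b) (hbj : b < P j)
    (D : ℕ → ℕ) (hDdigit : ∀ i, D i < b)
    (hD : ∀ n : ℕ, 1 ≤ n →
      (∑ i ∈ Finset.Icc 1 n, (D i : ℚ) * (b : ℚ) ^ (-(i : ℤ))) ≤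
          (∑ i ∈ Finset.range (j + 1), (P i : ℚ) ^ (-(h i : ℤ))) ∧
        (∑ i ∈ Finset.range (j + 1), (P i : ℚ) ^ (-(h i : ℤ))) <
          (∑ i ∈ Finset.Icc 1 n, (D i : ℚ) * (b : ℚ) ^ (-(i : ℤ))) + (b : ℚ) ^ (-(n : ℤ)))
    (s t : ℕ) (hst : s < t)
    (hper : ∀ i, s < i → D (i + (t - s)) = D i)
    (hleast : ∀ s' t', s' < t' → (∀ i, s' < i → D (i + (t' - s')) = D i) → t ≤ t') :
    t - s ≤ t ∧
      t < ∏ i ∈ Finset.range (j + 1), P i ^ h i ∧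
      (∏ i ∈ Finset.range (j + 1), P i ^ h i) ≤ P j ^ ((j + 1) * h j) ∧
      ∀ k : ℕ, 1 ≤ k → ∃ i, k ≤ i ∧ i < k + P j ^ ((j + 1) * h j) ∧ D i ≠ 0 :=
  no_long_zero_runs_general h hmono hpos j b hb hbj D hDdigit hD s t hleast
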